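/- arXiv:1201.6480 — 3 statements merged into one kernel-verified Lean document; each statement's English description precedes it below -/
import Mathlib

section
/- The function h₂(x) = (sin(x) - x·cos(x)) / (x·(1 - cos(x))) is strictly decreasing on (0, 2π). -/
/-!
The derivative of `h₂` has numerator `sin x * (x ^ 2 - 1 + cos x) - x * (1 - cos x)`.
Writing `x = 2 t`, this numerator equals `4 sin t * (cos t * (2 t ^ 2 - sin t ^ 2) - t sin t)`,
so it suffices that `cos t * (2 t ^ 2 - sin t ^ 2) < t sin t` for `0 < t < π`. For `t ≥ π / 2`
the left side is `≤ 0`. Otherwise the Taylor bounds `t - t ^ 3 / 6 ≤ sin t` and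
`cos t ≤ 1 - t ^ 2 / 2 + t ^ 4 / 24` reduce it to
`0 < t ^ 6 * (11 / 72 - t ^ 2 / 36 + t ^ 4 / 864)`.
-/

open Real

theorem Real.cos_le_one_sub_sq_div_two_add_pow_four_div (x : ℝ) :
    cos x ≤ 1 - x ^ 2 / 2 + x ^ 4 / 24 := by
  wlog hx : 0 ≤ x
  · simpa [Even.neg_pow (by decide : Even 4)] using this (-x) (by linarith)
  let f (t : ℝ) : ℝ := 1 - t ^ 2 / 2 + t ^ 4 / 24 - cos t
  have hderiv (t : ℝ) : deriv f t = sin t - (t - t ^ 3 / 6) := by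
    simp (disch := fun_prop) [f]
    ring
  have hmono : MonotoneOn f (Set.Ici 0) := by
    apply monotoneOn_of_deriv_nonneg (convex_Ici 0) (by fun_prop) (by fun_prop)
    grind [sin_ge_sub_cube, interior_Ici]
  have := hmono Set.self_mem_Ici hx hx
  grind [cos_zero]

theorem cos_mul_two_mul_sq_sub_sin_sq_lt_mul_sin {t : ℝ} (h0 : 0 < t) (hπ : t < π) :
    cos t * (2 * t ^ 2 - sin t ^ 2) < t * sin t := by
  have hsin : 0 < sin t := sin_pos_of_pos_of_lt_pi h0 hπ
  have hA : 0 ≤ 2 * t ^ 2 - sin t ^ 2 := by nlinarith [sin_lt h0]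
  rcases le_or_gt (π / 2) t with ht | ht
  · have hcos : cos t ≤ 0 := cos_nonpos_of_pi_div_two_le_of_le ht (by linarith)
    nlinarith [mul_nonpos_of_nonpos_of_nonneg hcos hA, mul_pos h0 hsin]
  · have ht2 : t ^ 2 < 5 / 2 := by nlinarith [pi_lt_d2]
    have hcos : 0 ≤ cos t := cos_nonneg_of_neg_pi_div_two_le_of_le (by linarith) ht.le
    have hs : t - t ^ 3 / 6 ≤ sin t := sin_ge_sub_cube h0.le
    have hs0 : 0 ≤ t - t ^ 3 / 6 := by nlinarith
    have hpoly : t * (t - t ^ 3 / 6) - (1 - t ^ 2 / 2 + t ^ 4 / 24) *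
        (2 * t ^ 2 - (t - t ^ 3 / 6) ^ 2) = t ^ 6 * (11 / 72 - t ^ 2 / 36 + t ^ 4 / 864) := by
      ring
    calc cos t * (2 * t ^ 2 - sin t ^ 2)
        ≤ cos t * (2 * t ^ 2 - (t - t ^ 3 / 6) ^ 2) := by gcongr
      _ ≤ (1 - t ^ 2 / 2 + t ^ 4 / 24) * (2 * t ^ 2 - (t - t ^ 3 / 6) ^ 2) := by
        gcongr
        · nlinarith
        · exact cos_le_one_sub_sq_div_two_add_pow_four_div t
      _ < t * (t - t ^ 3 / 6) := by nlinarith [pow_pos h0 6]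
      _ ≤ t * sin t := by gcongr

theorem sin_mul_sq_sub_one_add_cos_lt_mul_one_sub_cos {x : ℝ} (h0 : 0 < x) (h2π : x < 2 * π) :
    sin x * (x ^ 2 - 1 + cos x) < x * (1 - cos x) := by
  obtain ⟨t, rfl⟩ : ∃ t, x = 2 * t := ⟨x / 2, by ring⟩
  have hsin : 0 < sin t := sin_pos_of_pos_of_lt_pi (by linarith) (by linarith)
  have key := cos_mul_two_mul_sq_sub_sin_sq_lt_mul_sin (t := t) (by linarith) (by linarith)
  rw [sin_two_mul, cos_two_mul, cos_sq']
  nlinarith [mul_lt_mul_of_pos_left key (by positivity : 0 < 4 * sin t)]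

theorem mul_one_sub_cos_pos {x : ℝ} (h0 : 0 < x) (h2π : x < 2 * π) : 0 < x * (1 - cos x) := by
  obtain ⟨t, rfl⟩ : ∃ t, x = 2 * t := ⟨x / 2, by ring⟩
  have hsin : 0 < sin t := sin_pos_of_pos_of_lt_pi (by linarith) (by linarith)
  rw [cos_two_mul, cos_sq']
  nlinarith [mul_pos h0 (pow_pos hsin 2)]

noncomputable def h₂ (x : ℝ) : ℝ := (sin x - x * cos x) / (x * (1 - cos x))

theorem hasDerivAt_h₂ {x : ℝ} (hx : x * (1 - cos x) ≠ 0) :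
    HasDerivAt h₂
      ((sin x * (x ^ 2 - 1 + cos x) - x * (1 - cos x)) / (x * (1 - cos x)) ^ 2) x := by
  have hnum : HasDerivAt (fun x => sin x - x * cos x) (x * sin x) x :=
    ((hasDerivAt_sin x).sub ((hasDerivAt_id' x).mul (hasDerivAt_cos x))).congr_deriv (by ring)
  have hden : HasDerivAt (fun x => x * (1 - cos x)) (1 - cos x + x * sin x) x :=
    ((hasDerivAt_id' x).mul ((hasDerivAt_cos x).const_sub 1)).congr_deriv (by ring)
  refine (hnum.div hden hx).congr_deriv ?_
  congr 1
  linear_combination -x * sin_sq_add_cos_sq x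

theorem h2_strictAntiOn :
    StrictAntiOn (fun x : ℝ => (Real.sin x - x * Real.cos x) / (x * (1 - Real.cos x)))
      (Set.Ioo 0 (2 * Real.pi)) := by
  have hden : ∀ x ∈ Set.Ioo 0 (2 * π), 0 < x * (1 - cos x) :=
    fun x hx => mul_one_sub_cos_pos hx.1 hx.2
  have hderiv : ∀ x ∈ Set.Ioo 0 (2 * π), HasDerivAt h₂
      ((sin x * (x ^ 2 - 1 + cos x) - x * (1 - cos x)) / (x * (1 - cos x)) ^ 2) x :=
    fun x hx => hasDerivAt_h₂ (hden x hx).ne'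
  show StrictAntiOn h₂ _
  refine strictAntiOn_of_deriv_neg (convex_Ioo 0 (2 * π))
    (fun x hx => (hderiv x hx).continuousAt.continuousWithinAt) fun x hx => ?_
  rw [interior_Ioo] at hx
  rw [(hderiv x hx).deriv]
  exact div_neg_of_neg_of_pos
    (sub_neg.2 (sin_mul_sq_sub_one_add_cos_lt_mul_one_sub_cos hx.1 hx.2)) (pow_pos (hden x hx) 2)
end

section
/- For all a, b > 0 with a ≠ b, (1/π)·C(a,b) + (1 - 1/π)·H(a,b) < P(a,b) < (5/12)·C(a,b) + (7/12)·H(a,b), and the constants 1/π and 5/12 are best possible. -/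
open Real

noncomputable def Amean (a b : ℝ) : ℝ := (a + b) / 2
noncomputable def Gmean (a b : ℝ) : ℝ := Real.sqrt (a * b)
noncomputable def Hmean (a b : ℝ) : ℝ := 2 * a * b / (a + b)
noncomputable def Cmean (a b : ℝ) : ℝ := (a ^ 2 + b ^ 2) / (a + b)
noncomputable def Cbar (a b : ℝ) : ℝ := 2 * (a ^ 2 + a * b + b ^ 2) / (3 * (a + b))
noncomputable def Smean (a b : ℝ) : ℝ := Real.sqrt ((a ^ 2 + b ^ 2) / 2)
noncomputable def Pmean (a b : ℝ) : ℝ := (a - b) / (2 * Real.arcsin ((a - b) / (a + b)))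
noncomputable def Tmean (a b : ℝ) : ℝ := (a - b) / (2 * Real.arctan ((a - b) / (a + b)))

/-
With `A = (a + b) / 2` and `t = (a - b) / (a + b)` one has `C = A (1 + t²)`, `H = A (1 - t²)` and
`P = A t / arcsin t`, so `α C + (1 - α) H = A (1 - (1 - 2α) t²)`. Writing `t = sin θ` with
`0 < θ < π / 2`, both bounds compare `sin θ / θ` with `1 - c sin² θ`: for `c = 1 / 6` this
follows from `sin θ ≤ θ - θ³/6 + θ⁵/120`, for `c = 1 - 2/π` from `sin θ ≥ θ - θ³/6` when
`θ ≤ 6/5` and from `sin θ = cos (π/2 - θ) ≥ 1 - (π/2 - θ)²/2` near `π / 2`, where both sides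
are equal in the limit.
Letting `t → 1` shows that `1 / π` cannot be increased; letting `θ → 0` and using
`sin θ ≥ θ - θ³/6` shows that `5 / 12` cannot be decreased.
-/

open Set Filter Topology

theorem nonneg_of_hasDerivAt_nonneg {f f' : ℝ → ℝ} (hf : ∀ x, HasDerivAt f (f' x) x)
    (hf' : ∀ x, 0 < x → 0 ≤ f' x) (h0 : f 0 = 0) {x : ℝ} (hx : 0 ≤ x) : 0 ≤ f x := by
  have hmono : MonotoneOn f (Ici 0) :=
    monotoneOn_of_hasDerivWithinAt_nonneg (convex_Ici 0)
      (fun y _ => (hf y).continuousAt.continuousWithinAt)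
      (fun y _ => (hf y).hasDerivWithinAt)
      (fun y hy => hf' y (by simpa using hy))
  simpa [h0] using hmono self_mem_Ici hx hx

namespace Real

theorem cos_le_one_sub_sq_div_two_add_pow_four_div_s12 {x : ℝ} (hx : 0 ≤ x) :
    cos x ≤ 1 - x ^ 2 / 2 + x ^ 4 / 24 := by
  have hd (y : ℝ) : HasDerivAt (fun y => 1 - y ^ 2 / 2 + y ^ 4 / 24 - cos y)
      (sin y - (y - y ^ 3 / 6)) y := by
    refine ((((hasDerivAt_pow 2 y).div_const 2).const_sub 1).add
      ((hasDerivAt_pow 4 y).div_const 24)).sub (hasDerivAt_cos y) |>.congr_deriv ?_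
    push_cast; ring
  have := nonneg_of_hasDerivAt_nonneg hd (fun y hy => sub_nonneg.2 (sin_ge_sub_cube hy.le))
    (by simp) hx
  linarith

theorem sin_le_sub_pow_three_div_add_pow_five_div {x : ℝ} (hx : 0 ≤ x) :
    sin x ≤ x - x ^ 3 / 6 + x ^ 5 / 120 := by
  have hd (y : ℝ) : HasDerivAt (fun y => y - y ^ 3 / 6 + y ^ 5 / 120 - sin y)
      (1 - y ^ 2 / 2 + y ^ 4 / 24 - cos y) y := by
    refine (((hasDerivAt_id y).sub ((hasDerivAt_pow 3 y).div_const 6)).add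
      ((hasDerivAt_pow 5 y).div_const 120)).sub (hasDerivAt_sin y) |>.congr_deriv ?_
    push_cast; ring
  have := nonneg_of_hasDerivAt_nonneg hd
    (fun y hy => sub_nonneg.2 (cos_le_one_sub_sq_div_two_add_pow_four_div_s12 hy.le)) (by simp) hx
  linarith

theorem sin_lt_mul_one_sub_sin_sq_div_six {θ : ℝ} (hθ : 0 < θ) :
    sin θ < θ * (1 - sin θ ^ 2 / 6) := by
  rcases le_or_gt θ (6 / 5) with hsmall | hlarge
  · have hsin : 0 ≤ sin θ := sin_nonneg_of_nonneg_of_le_pi hθ.le (by linarith [pi_gt_three])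
    have htaylor := sin_le_sub_pow_three_div_add_pow_five_div hθ.le
    have hθ2 : θ ^ 2 ≤ 36 / 25 := by nlinarith
    have hpoly : θ - θ ^ 3 / 6 + θ ^ 5 / 120 <
        θ * (1 - (θ - θ ^ 3 / 6 + θ ^ 5 / 120) ^ 2 / 6) := by
      have h5 := pow_pos hθ 5
      have h7 : 0 < θ ^ 5 * θ ^ 2 := by positivity
      nlinarith [mul_nonneg h5.le (sub_nonneg.2 hθ2), mul_nonneg h7.le (sub_nonneg.2 hθ2)]
    nlinarith [pow_le_pow_left₀ hsin htaylor 2]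
  · nlinarith [sin_le_one θ, sin_sq_le_one θ]

theorem mul_one_sub_mul_sin_sq_lt_sin {θ : ℝ} (h0 : 0 < θ) (h1 : θ < π / 2) :
    θ * (1 - (1 - 2 / π) * sin θ ^ 2) < sin θ := by
  have hk : 0.36 < 1 - 2 / π := by
    rw [lt_sub_comm, div_lt_iff₀ pi_pos]
    linarith [pi_gt_d2]
  -- The left side decreases as `sin θ ≥ 0` grows, so `sin θ` may be replaced by any `L ≤ sin θ`.
  suffices ∃ L, 0 ≤ L ∧ L ≤ sin θ ∧ θ * (1 - (1 - 2 / π) * L ^ 2) < L by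
    obtain ⟨L, hL0, hLsin, hL⟩ := this
    nlinarith [mul_le_mul_of_nonneg_left (pow_le_pow_left₀ hL0 hLsin 2)
      (mul_nonneg h0.le (by linarith : (0 : ℝ) ≤ 1 - 2 / π))]
  rcases le_or_gt θ (6 / 5) with hsmall | hlarge
  · have hθ2 : θ ^ 2 ≤ 36 / 25 := by nlinarith
    refine ⟨θ - θ ^ 3 / 6, by nlinarith, sin_ge_sub_cube h0.le, ?_⟩
    have hq : 1 / 6 < (1 - 2 / π) * (1 - θ ^ 2 / 6) ^ 2 := by nlinarith
    nlinarith [pow_pos h0 3]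
  · obtain ⟨x, rfl⟩ : ∃ x, θ = π / 2 - x := ⟨π / 2 - θ, by ring⟩
    have hx0 : 0 < x := by linarith
    have hx1 : x < 0.38 := by linarith [pi_lt_d2]
    refine ⟨1 - x ^ 2 / 2, by nlinarith, sin_pi_div_two_sub x ▸ one_sub_sq_div_two_le_cos, ?_⟩
    have hexpand :
        π * ((1 - x ^ 2 / 2) - (π / 2 - x) * (1 - (1 - 2 / π) * (1 - x ^ 2 / 2) ^ 2)) =
          x * (2 - (π ^ 2 / 2 - π / 2) * x + (π - 2) * x ^ 2 + π * (π / 2 - 1) / 4 * x ^ 3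
            - (π - 2) / 4 * x ^ 4) := by
      field_simp
      ring
    have hpoly : 0 < 2 - (π ^ 2 / 2 - π / 2) * x + (π - 2) * x ^ 2
        + π * (π / 2 - 1) / 4 * x ^ 3 - (π - 2) / 4 * x ^ 4 := by
      nlinarith [pi_gt_d2, pi_lt_d2, mul_pos hx0 hx0, pow_pos hx0 3, pow_pos hx0 4]
    rw [← sub_pos]
    exact pos_of_mul_pos_right (hexpand ▸ mul_pos hx0 hpoly) pi_pos.le

theorem abs_div_arcsin_abs (t : ℝ) : |t| / arcsin |t| = t / arcsin t := by
  rcases le_or_gt 0 t with ht | ht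
  · rw [abs_of_nonneg ht]
  · rw [abs_of_neg ht, arcsin_neg, neg_div_neg_eq]

theorem div_arcsin_lt_one_sub_sq_div_six {t : ℝ} (h0 : t ≠ 0) (h1 : |t| < 1) :
    t / arcsin t < 1 - t ^ 2 / 6 := by
  rw [← abs_div_arcsin_abs, ← sq_abs]
  have hθ : 0 < arcsin |t| := arcsin_pos.2 (abs_pos.2 h0)
  have := sin_lt_mul_one_sub_sin_sq_div_six hθ
  rwa [sin_arcsin (by linarith [abs_nonneg t]) h1.le, ← div_lt_iff₀' hθ] at this

theorem one_sub_mul_sq_lt_div_arcsin {t : ℝ} (h0 : t ≠ 0) (h1 : |t| < 1) :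
    1 - (1 - 2 / π) * t ^ 2 < t / arcsin t := by
  rw [← abs_div_arcsin_abs, ← sq_abs]
  have hθ : 0 < arcsin |t| := arcsin_pos.2 (abs_pos.2 h0)
  have := mul_one_sub_mul_sin_sq_lt_sin hθ (arcsin_lt_pi_div_two.2 h1)
  rwa [sin_arcsin (by linarith [abs_nonneg t]) h1.le, ← lt_div_iff₀' hθ] at this

end Real

section Means

variable {a b : ℝ}

theorem mul_Cmean_add_one_sub_mul_Hmean (α : ℝ) (h : a + b ≠ 0) :
    α * Cmean a b + (1 - α) * Hmean a b =
      (a + b) / 2 * (1 - (1 - 2 * α) * ((a - b) / (a + b)) ^ 2) := by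
  unfold Cmean Hmean
  field_simp
  ring

theorem Pmean_eq (h : a + b ≠ 0) :
    Pmean a b = (a + b) / 2 * ((a - b) / (a + b) / arcsin ((a - b) / (a + b))) := by
  unfold Pmean
  field_simp

theorem mul_Cmean_add_one_sub_mul_Hmean_one_add_one_sub (α t : ℝ) :
    α * Cmean (1 + t) (1 - t) + (1 - α) * Hmean (1 + t) (1 - t) = 1 - (1 - 2 * α) * t ^ 2 := by
  rw [mul_Cmean_add_one_sub_mul_Hmean α (by norm_num)]
  ring_nf

theorem Pmean_one_add_one_sub (t : ℝ) : Pmean (1 + t) (1 - t) = t / arcsin t := by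
  rw [Pmean_eq (by norm_num)]
  ring_nf

theorem abs_sub_div_add_lt_one (ha : 0 < a) (hb : 0 < b) : |(a - b) / (a + b)| < 1 := by
  rw [abs_div, abs_of_pos (add_pos ha hb), div_lt_one (add_pos ha hb)]
  exact abs_sub_lt_iff.2 ⟨by linarith, by linarith⟩

theorem mul_Cmean_add_one_sub_mul_Hmean_lt_Pmean {α : ℝ} (hα : α ≤ 1 / π) (ha : 0 < a)
    (hb : 0 < b) (hab : a ≠ b) : α * Cmean a b + (1 - α) * Hmean a b < Pmean a b := by
  have hs : 0 < a + b := add_pos ha hb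
  have ht : (a - b) / (a + b) ≠ 0 := div_ne_zero (sub_ne_zero.2 hab) hs.ne'
  rw [mul_Cmean_add_one_sub_mul_Hmean α hs.ne', Pmean_eq hs.ne']
  refine mul_lt_mul_of_pos_left ?_ (half_pos hs)
  calc 1 - (1 - 2 * α) * ((a - b) / (a + b)) ^ 2
      ≤ 1 - (1 - 2 / π) * ((a - b) / (a + b)) ^ 2 := by
        have : 2 / π = 2 * (1 / π) := by ring
        nlinarith [sq_nonneg ((a - b) / (a + b))]
    _ < _ := one_sub_mul_sq_lt_div_arcsin ht (abs_sub_div_add_lt_one ha hb)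

theorem Pmean_lt_mul_Cmean_add_one_sub_mul_Hmean {β : ℝ} (hβ : 5 / 12 ≤ β) (ha : 0 < a)
    (hb : 0 < b) (hab : a ≠ b) : Pmean a b < β * Cmean a b + (1 - β) * Hmean a b := by
  have hs : 0 < a + b := add_pos ha hb
  have ht : (a - b) / (a + b) ≠ 0 := div_ne_zero (sub_ne_zero.2 hab) hs.ne'
  rw [mul_Cmean_add_one_sub_mul_Hmean β hs.ne', Pmean_eq hs.ne']
  refine mul_lt_mul_of_pos_left ?_ (half_pos hs)
  calc _ < 1 - ((a - b) / (a + b)) ^ 2 / 6 :=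
        div_arcsin_lt_one_sub_sq_div_six ht (abs_sub_div_add_lt_one ha hb)
    _ ≤ 1 - (1 - 2 * β) * ((a - b) / (a + b)) ^ 2 := by
        nlinarith [sq_nonneg ((a - b) / (a + b))]

theorem le_one_div_pi_of_forall_lt_Pmean {α : ℝ}
    (h : ∀ a b : ℝ, 0 < a → 0 < b → a ≠ b →
      α * Cmean a b + (1 - α) * Hmean a b < Pmean a b) :
    α ≤ 1 / π := by
  have hlt : ∀ t ∈ Ioo (0 : ℝ) 1, 1 - (1 - 2 * α) * t ^ 2 < t / arcsin t := fun t ht => by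
    simpa only [mul_Cmean_add_one_sub_mul_Hmean_one_add_one_sub, Pmean_one_add_one_sub] using
      h (1 + t) (1 - t) (by linarith [ht.1]) (by linarith [ht.2]) (ne_of_gt (by linarith [ht.1]))
  have hleft : Tendsto (fun t : ℝ => 1 - (1 - 2 * α) * t ^ 2) (𝓝[<] 1) (𝓝 (2 * α)) :=
    ((by fun_prop : Continuous fun t : ℝ => 1 - (1 - 2 * α) * t ^ 2).tendsto' _ _
      (by ring)).mono_left nhdsWithin_le_nhds
  have hright : Tendsto (fun t : ℝ => t / arcsin t) (𝓝[<] 1) (𝓝 (2 / π)) := by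
    have : Tendsto (fun t : ℝ => t / arcsin t) (𝓝 1) (𝓝 (1 / arcsin 1)) :=
      tendsto_id.div (continuous_arcsin.tendsto 1) (by simp [pi_ne_zero])
    rw [arcsin_one, one_div_div] at this
    exact this.mono_left nhdsWithin_le_nhds
  have := le_of_tendsto_of_tendsto hleft hright <| by
    filter_upwards [Ioo_mem_nhdsLT zero_lt_one] with t ht using (hlt t ht).le
  linarith [show 2 / π = 2 * (1 / π) by ring]

theorem five_div_twelve_le_of_forall_Pmean_lt {β : ℝ}
    (h : ∀ a b : ℝ, 0 < a → 0 < b → a ≠ b →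
      Pmean a b < β * Cmean a b + (1 - β) * Hmean a b) :
    5 / 12 ≤ β := by
  have hle : ∀ θ ∈ Ioo (0 : ℝ) 1, (1 - 2 * β) * (1 - θ ^ 2 / 6) ^ 2 ≤ 1 / 6 := by
    rintro θ ⟨hθ0, hθ1⟩
    have hsin : 0 < sin θ := sin_pos_of_pos_of_lt_pi hθ0 (by linarith [pi_gt_three])
    have hsin1 : sin θ < 1 := (sin_lt hθ0).trans hθ1
    have hmean := h (1 + sin θ) (1 - sin θ) (by linarith) (by linarith) (ne_of_gt (by linarith))
    rw [mul_Cmean_add_one_sub_mul_Hmean_one_add_one_sub, Pmean_one_add_one_sub,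
      arcsin_sin (by linarith [pi_pos]) (by linarith [pi_gt_three]), div_lt_iff₀' hθ0] at hmean
    have hcube := sin_ge_sub_cube hθ0.le
    rcases le_or_gt (1 - 2 * β) 0 with hc | hc
    · nlinarith [sq_nonneg (1 - θ ^ 2 / 6)]
    · have hsq : (θ - θ ^ 3 / 6) ^ 2 ≤ sin θ ^ 2 := pow_le_pow_left₀
        (by nlinarith [mul_pos hθ0 (by nlinarith : (0 : ℝ) < 1 - θ ^ 2 / 6)]) hcube 2
      have h1 : (1 - 2 * β) * θ * sin θ ^ 2 < θ ^ 3 / 6 := by nlinarith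
      have h2 := mul_le_mul_of_nonneg_left hsq (mul_pos hc hθ0).le
      have h3 : θ ^ 3 * ((1 - 2 * β) * (1 - θ ^ 2 / 6) ^ 2) < θ ^ 3 * (1 / 6) := by nlinarith
      exact (lt_of_mul_lt_mul_left h3 (pow_pos hθ0 3).le).le
  have hlim :
      Tendsto (fun θ : ℝ => (1 - 2 * β) * (1 - θ ^ 2 / 6) ^ 2) (𝓝[>] 0) (𝓝 (1 - 2 * β)) :=
    ((by fun_prop : Continuous fun θ : ℝ => (1 - 2 * β) * (1 - θ ^ 2 / 6) ^ 2).tendsto' _ _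
      (by ring)).mono_left nhdsWithin_le_nhds
  have := le_of_tendsto hlim <| by
    filter_upwards [Ioo_mem_nhdsGT zero_lt_one] with θ hθ using hle θ hθ
  linarith

end Means

theorem sharp_stmt_12 :
    (∀ a b : ℝ, 0 < a → 0 < b → a ≠ b →
        (1 / Real.pi) * Cmean a b + (1 - (1 / Real.pi)) * Hmean a b < Pmean a b ∧
        Pmean a b < (5 / 12) * Cmean a b + (1 - (5 / 12)) * Hmean a b) ∧
    (∀ α : ℝ, (∀ a b : ℝ, 0 < a → 0 < b → a ≠ b →
        α * Cmean a b + (1 - α) * Hmean a b < Pmean a b) ↔ α ≤ (1 / Real.pi)) ∧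
    (∀ β : ℝ, (∀ a b : ℝ, 0 < a → 0 < b → a ≠ b →
        Pmean a b < β * Cmean a b + (1 - β) * Hmean a b) ↔ β ≥ (5 / 12)) :=
  ⟨fun _ _ ha hb hab => ⟨mul_Cmean_add_one_sub_mul_Hmean_lt_Pmean le_rfl ha hb hab,
      Pmean_lt_mul_Cmean_add_one_sub_mul_Hmean le_rfl ha hb hab⟩,
    fun _ => ⟨le_one_div_pi_of_forall_lt_Pmean,
      fun hα _ _ ha hb hab => mul_Cmean_add_one_sub_mul_Hmean_lt_Pmean hα ha hb hab⟩,
    fun _ => ⟨five_div_twelve_le_of_forall_Pmean_lt,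
      fun hβ _ _ ha hb hab => Pmean_lt_mul_Cmean_add_one_sub_mul_Hmean hβ ha hb hab⟩⟩
end

section
/- For all a, b > 0 with a ≠ b, (2/π)·A(a,b) + (1 - 2/π)·G(a,b) < P(a,b) < (2/3)·A(a,b) + (1/3)·G(a,b), and the constants 2/π and 2/3 are best possible. -/
/-!
Put `A = Amean a b` and `sin x = (a - b) / (a + b)` with `0 < |x| < π / 2`. Then
`a = A (1 + sin x)`, `b = A (1 - sin x)`, `Gmean a b = A cos x` and `Pmean a b = A sinc x`, so the
mean inequalities become `α + (1 - α) cos x < sinc x < β + (1 - β) cos x`, conditions monotone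
in `α` and `β`. For `α = 2 / k` the sign of `sinc x - (α + (1 - α) cos x)` on `x > 0` is that of
`seiffertGap k x = k sin x - 2 x - (k - 2) x cos x`, whose derivative is
`x sin x (k - 2 - tan (x / 2) / (x / 2))` by the half-angle formula `1 - cos x = sin x tan (x / 2)`.
Since `tan u / u` increases from `1` on `(0, π / 2)`, `seiffertGap 3` decreases from `0`, while
`seiffertGap π` first increases and then decreases, vanishing at `0` and at `π / 2`.
Sharpness: letting `x → π / 2` forces `α ≤ 2 / π`, and comparing `sinc x = 1 - x ^ 2 / 6 + O(x ^ 4)`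
with `cos x = 1 - x ^ 2 / 2 + O(x ^ 4)` as `x → 0` forces `β ≥ 2 / 3`.
-/

open Real

open Set

lemma tan_div_self_strictMonoOn : StrictMonoOn (fun u : ℝ => tan u / u) (Ioo 0 (π / 2)) := by
  refine strictMonoOn_of_deriv_pos (convex_Ioo _ _) ?_ fun u hu => ?_
  · exact fun u hu => ((continuousAt_tan.2 (cos_pos_of_mem_Ioo
      ⟨by linarith [hu.1, pi_pos], hu.2⟩).ne').div continuousAt_id hu.1.ne').continuousWithinAt
  rw [interior_Ioo] at hu
  obtain ⟨hu0, hu⟩ := hu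
  have hcos : 0 < cos u := cos_pos_of_mem_Ioo ⟨by linarith, hu⟩
  have hsin_mul_cos : sin u * cos u < u := by
    have := sin_lt (by linarith : 0 < 2 * u)
    rw [sin_two_mul] at this
    linarith
  rw [((hasDerivAt_tan hcos.ne').fun_div (hasDerivAt_id' u) hu0.ne').deriv, tan_eq_sin_div_cos]
  have : 1 / cos u ^ 2 * u - sin u / cos u * 1 = (u - sin u * cos u) / cos u ^ 2 := by
    field_simp
  rw [this]
  have := sub_pos.2 hsin_mul_cos
  positivity

lemma one_sub_cos_eq_sin_mul_tan_half {t : ℝ} (ht : cos (t / 2) ≠ 0) :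
    1 - cos t = sin t * tan (t / 2) := by
  conv_lhs => rw [← mul_div_cancel₀ t two_ne_zero, cos_two_mul]
  conv_rhs => rw [← mul_div_cancel₀ t two_ne_zero, sin_two_mul, tan_eq_sin_div_cos]
  field_simp
  nlinarith [sin_sq_add_cos_sq (t / 2)]

noncomputable def seiffertGap (k t : ℝ) : ℝ := k * sin t - 2 * t - (k - 2) * (t * cos t)

lemma seiffertGap_eq {k t : ℝ} (hk : k ≠ 0) (ht : t ≠ 0) :
    seiffertGap k t = k * t * (sinc t - (2 / k + (1 - 2 / k) * cos t)) := by
  rw [seiffertGap, sinc_of_ne_zero ht]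
  field_simp
  ring

lemma continuous_seiffertGap (k : ℝ) : Continuous (seiffertGap k) := by
  unfold seiffertGap; fun_prop

lemma hasDerivAt_seiffertGap (k : ℝ) {t : ℝ} (ht0 : 0 < t) (ht : t < π) :
    HasDerivAt (seiffertGap k) (t * sin t * (k - 2 - tan (t / 2) / (t / 2))) t := by
  have hcos : cos (t / 2) ≠ 0 := (cos_pos_of_mem_Ioo ⟨by linarith [pi_pos], by linarith⟩).ne'
  have h_half := one_sub_cos_eq_sin_mul_tan_half hcos
  refine ((((hasDerivAt_sin t).const_mul k).fun_sub ((hasDerivAt_id' t).const_mul 2)).fun_sub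
    (((hasDerivAt_id' t).fun_mul (hasDerivAt_cos t)).const_mul (k - 2))).congr_deriv ?_
  field_simp
  linear_combination (-2 : ℝ) * h_half

lemma deriv_seiffertGap_pos {k t : ℝ} (ht0 : 0 < t) (ht : t < π)
    (h : tan (t / 2) / (t / 2) < k - 2) :
    0 < deriv (seiffertGap k) t := by
  rw [(hasDerivAt_seiffertGap k ht0 ht).deriv]
  have := sin_pos_of_pos_of_lt_pi ht0 ht
  exact mul_pos (by positivity) (by linarith)

lemma deriv_seiffertGap_neg {k t : ℝ} (ht0 : 0 < t) (ht : t < π)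
    (h : k - 2 < tan (t / 2) / (t / 2)) :
    deriv (seiffertGap k) t < 0 := by
  rw [(hasDerivAt_seiffertGap k ht0 ht).deriv]
  have := sin_pos_of_pos_of_lt_pi ht0 ht
  exact mul_neg_of_pos_of_neg (by positivity) (by linarith)

lemma seiffertGap_zero (k : ℝ) : seiffertGap k 0 = 0 := by simp [seiffertGap]

lemma seiffertGap_strictAntiOn {k : ℝ} (hk : k ≤ 3) : StrictAntiOn (seiffertGap k) (Icc 0 π) := by
  refine strictAntiOn_of_deriv_neg (convex_Icc _ _) (continuous_seiffertGap k).continuousOn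
    fun t ht => ?_
  rw [interior_Icc] at ht
  have ht2 : 0 < t / 2 := by linarith [ht.1]
  have := lt_tan ht2 (by linarith [ht.2])
  exact deriv_seiffertGap_neg ht.1 ht.2 (by linarith [(one_lt_div ht2).2 this])

lemma seiffertGap_neg {k x : ℝ} (hk : k ≤ 3) (hx0 : 0 < x) (hx : x ≤ π) : seiffertGap k x < 0 := by
  simpa [seiffertGap_zero] using
    seiffertGap_strictAntiOn hk ⟨le_rfl, pi_pos.le⟩ ⟨hx0.le, hx⟩ hx0

lemma seiffertGap_pi_pos {x : ℝ} (hx0 : 0 < x) (hx : x < π / 2) : 0 < seiffertGap π x := by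
  have hmem : ∀ {t}, 0 < t → t < π / 2 → t / 2 ∈ Ioo 0 (π / 2) :=
    fun ht0 ht => ⟨by linarith, by linarith⟩
  rcases le_or_gt (tan (x / 2) / (x / 2)) (π - 2) with hle | hgt
  · have hmono : StrictMonoOn (seiffertGap π) (Icc 0 x) := by
      refine strictMonoOn_of_deriv_pos (convex_Icc _ _) (continuous_seiffertGap π).continuousOn
        fun t ht => ?_
      rw [interior_Icc] at ht
      refine deriv_seiffertGap_pos ht.1 (by linarith [ht.2]) (lt_of_lt_of_le ?_ hle)
      exact tan_div_self_strictMonoOn (hmem ht.1 (by linarith [ht.2])) (hmem hx0 hx)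
        (by linarith [ht.2])
    simpa [seiffertGap_zero] using hmono ⟨le_rfl, hx0.le⟩ ⟨hx0.le, le_rfl⟩ hx0
  · have hanti : StrictAntiOn (seiffertGap π) (Icc x (π / 2)) := by
      refine strictAntiOn_of_deriv_neg (convex_Icc _ _) (continuous_seiffertGap π).continuousOn
        fun t ht => ?_
      rw [interior_Icc] at ht
      have ht0 : 0 < t := hx0.trans ht.1
      refine deriv_seiffertGap_neg ht0 (by linarith [ht.2]) (hgt.trans ?_)
      exact tan_div_self_strictMonoOn (hmem hx0 hx) (hmem ht0 ht.2) (by linarith [ht.1])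
    have hend : seiffertGap π (π / 2) = 0 := by simp [seiffertGap]; ring
    simpa [hend] using hanti ⟨le_rfl, hx.le⟩ ⟨hx.le, le_rfl⟩ hx

lemma sinc_abs (x : ℝ) : sinc |x| = sinc x := by
  rcases abs_choice x with h | h <;> simp [h, sinc_neg]

lemma two_div_pi_add_mul_cos_lt_sinc {x : ℝ} (hx0 : x ≠ 0) (hx : |x| < π / 2) :
    2 / π + (1 - 2 / π) * cos x < sinc x := by
  have h := seiffertGap_pi_pos (abs_pos.2 hx0) hx
  rw [seiffertGap_eq pi_ne_zero (abs_ne_zero.2 hx0), sinc_abs, cos_abs] at h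
  exact sub_pos.1 (pos_of_mul_pos_right h (by positivity))

lemma sinc_lt_two_div_three_add_mul_cos {x : ℝ} (hx0 : x ≠ 0) (hx : |x| ≤ π) :
    sinc x < 2 / 3 + (1 - 2 / 3) * cos x := by
  have h := seiffertGap_neg (by norm_num : (3 : ℝ) ≤ 3) (abs_pos.2 hx0) hx
  rw [seiffertGap_eq three_ne_zero (abs_ne_zero.2 hx0), sinc_abs, cos_abs] at h
  exact sub_neg.1 (neg_of_mul_neg_right h (by positivity))

lemma Amean_angle (A x : ℝ) : Amean (A * (1 + sin x)) (A * (1 - sin x)) = A := by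
  unfold Amean; ring

lemma Gmean_angle {A x : ℝ} (hA : 0 ≤ A) (hx : 0 ≤ cos x) :
    Gmean (A * (1 + sin x)) (A * (1 - sin x)) = A * cos x := by
  rw [Gmean, ← sqrt_sq (mul_nonneg hA hx)]
  congr 1
  linear_combination -A ^ 2 * sin_sq_add_cos_sq x

lemma Pmean_angle {A x : ℝ} (hA : A ≠ 0) (hx0 : x ≠ 0) (hx : x ∈ Icc (-(π / 2)) (π / 2)) :
    Pmean (A * (1 + sin x)) (A * (1 - sin x)) = A * sinc x := by
  have hsin :
      (A * (1 + sin x) - A * (1 - sin x)) / (A * (1 + sin x) + A * (1 - sin x)) = sin x := by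
    field_simp; ring
  rw [Pmean, hsin, arcsin_sin hx.1 hx.2, sinc_of_ne_zero hx0]
  field_simp
  ring

lemma exists_angle {a b : ℝ} (ha : 0 < a) (hb : 0 < b) (hab : a ≠ b) :
    ∃ A, 0 < A ∧ ∃ x, x ≠ 0 ∧ |x| < π / 2 ∧ a = A * (1 + sin x) ∧ b = A * (1 - sin x) := by
  have hs : 0 < a + b := by linarith
  have ht : |(a - b) / (a + b)| < 1 := by
    rw [abs_div, abs_of_pos hs, div_lt_one hs, abs_lt]; constructor <;> linarith
  obtain ⟨ht₁, ht₂⟩ := abs_lt.1 ht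
  refine ⟨(a + b) / 2, by positivity, arcsin ((a - b) / (a + b)),
    mt arcsin_eq_zero_iff.1 (div_ne_zero (sub_ne_zero.2 hab) hs.ne'),
    abs_lt.2 ⟨neg_pi_div_two_lt_arcsin.2 ht₁, arcsin_lt_pi_div_two.2 ht₂⟩, ?_, ?_⟩ <;>
  · rw [sin_arcsin ht₁.le ht₂.le]; field_simp; ring

lemma forall_means_iff_forall_angle (p : ℝ → ℝ → ℝ → Prop)
    (hp : ∀ A, 0 < A → ∀ g q, p A (A * g) (A * q) ↔ p 1 g q) :
    (∀ a b : ℝ, 0 < a → 0 < b → a ≠ b → p (Amean a b) (Gmean a b) (Pmean a b)) ↔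
      ∀ x, x ≠ 0 → |x| < π / 2 → p 1 (cos x) (sinc x) := by
  have hcos : ∀ {x}, |x| < π / 2 → 0 < cos x := fun hx => cos_pos_of_mem_Ioo (abs_lt.1 hx)
  constructor
  · intro h x hx0 hx
    have hsin : |sin x| < 1 := by
      rw [← sq_lt_one_iff_abs_lt_one]; nlinarith [sin_sq_add_cos_sq x, hcos hx]
    have hsin0 : sin x ≠ 0 := mt (sin_eq_zero_iff_of_lt_of_lt
      (by linarith [(abs_lt.1 hx).1, pi_pos]) (by linarith [(abs_lt.1 hx).2, pi_pos])).1 hx0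
    obtain ⟨hsin₁, hsin₂⟩ := abs_lt.1 hsin
    have := h (1 * (1 + sin x)) (1 * (1 - sin x)) (by linarith) (by linarith)
      (fun heq => hsin0 (by linarith))
    rwa [Amean_angle, Gmean_angle zero_le_one (hcos hx).le,
      Pmean_angle one_ne_zero hx0 (abs_le.1 hx.le), one_mul, one_mul] at this
  · intro h a b ha hb hab
    obtain ⟨A, hA, x, hx0, hx, rfl, rfl⟩ := exists_angle ha hb hab
    rw [Amean_angle, Gmean_angle hA.le (hcos hx).le, Pmean_angle hA.ne' hx0 (abs_le.1 hx.le),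
      hp A hA]
    exact h x hx0 hx

lemma add_mul_Gmean_lt_Pmean_iff (α : ℝ) :
    (∀ a b : ℝ, 0 < a → 0 < b → a ≠ b → α * Amean a b + (1 - α) * Gmean a b < Pmean a b) ↔
      ∀ x, x ≠ 0 → |x| < π / 2 → α + (1 - α) * cos x < sinc x := by
  simpa only [mul_one] using forall_means_iff_forall_angle (fun A G P => α * A + (1 - α) * G < P)
    fun A hA g q => by
      conv_rhs => rw [← mul_lt_mul_iff_right₀ hA]
      ring_nf

lemma Pmean_lt_add_mul_Gmean_iff (β : ℝ) :
    (∀ a b : ℝ, 0 < a → 0 < b → a ≠ b → Pmean a b < β * Amean a b + (1 - β) * Gmean a b) ↔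
      ∀ x, x ≠ 0 → |x| < π / 2 → sinc x < β + (1 - β) * cos x := by
  simpa only [mul_one] using forall_means_iff_forall_angle (fun A G P => P < β * A + (1 - β) * G)
    fun A hA g q => by
      conv_rhs => rw [← mul_lt_mul_iff_right₀ hA]
      ring_nf

lemma one_sub_sq_div_six_le_sinc (x : ℝ) : 1 - x ^ 2 / 6 ≤ sinc x := by
  rcases eq_or_ne x 0 with rfl | hx
  · simp
  rw [← sinc_abs, sinc_of_ne_zero (abs_ne_zero.2 hx), le_div_iff₀ (abs_pos.2 hx), ← sq_abs]
  linarith [sin_ge_sub_cube (abs_nonneg x)]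

lemma add_mul_cos_lt_sinc_iff (α : ℝ) :
    (∀ x, x ≠ 0 → |x| < π / 2 → α + (1 - α) * cos x < sinc x) ↔ α ≤ 2 / π := by
  constructor
  · intro h
    have hle : ∀ x ∈ Ioo 0 (π / 2), α + (1 - α) * cos x ≤ sinc x := fun x hx =>
      (h x hx.1.ne' (by rw [abs_of_pos hx.1]; exact hx.2)).le
    have hend : π / 2 ∈ closure (Ioo 0 (π / 2)) := by
      rw [closure_Ioo (by positivity)]; exact right_mem_Icc.2 (by positivity)
    have := le_on_closure hle (by fun_prop) continuous_sinc.continuousOn hend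
    rwa [cos_pi_div_two, sinc_of_ne_zero (by positivity), sin_pi_div_two, mul_zero, add_zero,
      one_div_div] at this
  · intro hα x hx0 hx
    calc α + (1 - α) * cos x ≤ 2 / π + (1 - 2 / π) * cos x := by nlinarith [cos_le_one x]
      _ < sinc x := two_div_pi_add_mul_cos_lt_sinc hx0 hx

lemma sinc_lt_add_mul_cos_iff (β : ℝ) :
    (∀ x, x ≠ 0 → |x| < π / 2 → sinc x < β + (1 - β) * cos x) ↔ 2 / 3 ≤ β := by
  constructor
  · intro h
    by_contra! hβ
    have hle : ∀ x ∈ Ioo (0 : ℝ) 1, (1 - β) * (1 / 2 - x ^ 2 * (5 / 96)) ≤ 1 / 6 := by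
      rintro x ⟨hx0, hx1⟩
      have hsinc := h x hx0.ne' (by rw [abs_of_pos hx0]; linarith [pi_gt_three])
      have hsinc_ge := one_sub_sq_div_six_le_sinc x
      have hcos := cos_bound (x := x) (by rw [abs_of_pos hx0]; exact hx1.le)
      rw [abs_of_pos hx0, abs_le] at hcos
      have : x ^ 2 * ((1 - β) * (1 / 2 - x ^ 2 * (5 / 96))) < x ^ 2 * (1 / 6) := by
        nlinarith [mul_le_mul_of_nonneg_left hcos.2 (by linarith : (0 : ℝ) ≤ 1 - β)]
      exact (lt_of_mul_lt_mul_left this (sq_nonneg x)).le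
    have hend : (0 : ℝ) ∈ closure (Ioo 0 1) := by
      rw [closure_Ioo zero_ne_one]; exact left_mem_Icc.2 zero_le_one
    have := le_on_closure hle (by fun_prop) continuousOn_const hend
    norm_num at this
    linarith
  · intro hβ x hx0 hx
    calc sinc x < 2 / 3 + (1 - 2 / 3) * cos x :=
          sinc_lt_two_div_three_add_mul_cos hx0 (by linarith [pi_pos])
      _ ≤ β + (1 - β) * cos x := by nlinarith [cos_le_one x]

theorem sharp_stmt_17 :
    (∀ a b : ℝ, 0 < a → 0 < b → a ≠ b →
        (2 / Real.pi) * Amean a b + (1 - (2 / Real.pi)) * Gmean a b < Pmean a b ∧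
        Pmean a b < (2 / 3) * Amean a b + (1 - (2 / 3)) * Gmean a b) ∧
    (∀ α : ℝ, (∀ a b : ℝ, 0 < a → 0 < b → a ≠ b →
        α * Amean a b + (1 - α) * Gmean a b < Pmean a b) ↔ α ≤ (2 / Real.pi)) ∧
    (∀ β : ℝ, (∀ a b : ℝ, 0 < a → 0 < b → a ≠ b →
        Pmean a b < β * Amean a b + (1 - β) * Gmean a b) ↔ β ≥ (2 / 3)) := by
  have lower (α : ℝ) := (add_mul_Gmean_lt_Pmean_iff α).trans (add_mul_cos_lt_sinc_iff α)
  have upper (β : ℝ) := (Pmean_lt_add_mul_Gmean_iff β).trans (sinc_lt_add_mul_cos_iff β)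
  exact ⟨fun a b ha hb hab => ⟨(lower _).2 le_rfl a b ha hb hab, (upper _).2 le_rfl a b ha hb hab⟩,
    lower, upper⟩
end
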